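/- arXiv:1604.07039 — 2 statements merged into one kernel-verified Lean document; each statement's English description precedes it below -/
import Mathlib

section
/- (Lemma 2, part o2) Suppose X^n ⊂ ℝ^d (d ≥ 2) is in general position and M(X^n) has affine dimension d. Let z_1 be a point in the interior of M(X^n) with B̃_{z_1} ≠ ∅. Then for every z ∈ B_{z_1} one has U_z ⊆ U_{z_1}. -/
/-!
If `u` is an optimal direction at `z ∈ B_{z₁}`, then `u ∉ H_{z,z₁}`, so the halfspace
`{⟪u, ·⟫ ≤ ⟪u, z₁⟫}` lies inside `{⟪u, ·⟫ ≤ ⟪u, z⟫}`. Its count is therefore at most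
`n · D(z) = n · λ* = n · D(z₁)`, and by definition of depth at least `n · D(z₁)`; hence `u`
realizes the depth at `z₁` too.
-/

open scoped RealInnerProductSpace
open MeasureTheory

noncomputable section

/-- `E d` is the Euclidean space `ℝ^d`. -/
abbrev E (d : ℕ) : Type := EuclideanSpace ℝ (Fin d)

/-- A sample `X` of `n` points in `ℝ^d` is in general position if no affine hyperplane
(encoded as `{x | ⟪v, x⟫ = c}` for some `v ≠ 0`) contains more than `d` of the points. -/
def inGeneralPosition {d n : ℕ} (X : Fin n → E d) : Prop :=
  ∀ v : E d, v ≠ 0 → ∀ c : ℝ, ({i : Fin n | ⟪v, X i⟫ = c} : Set (Fin n)).ncard ≤ d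

/-- Number of sample points in the closed halfspace `{z | ⟪u, z⟫ ≤ ⟪u, x⟫}`. -/
def sideCount {d n : ℕ} (X : Fin n → E d) (u x : E d) : ℕ :=
  ({i : Fin n | ⟪u, X i⟫ ≤ ⟪u, x⟫} : Set (Fin n)).ncard

/-- Tukey's halfspace depth of `x` with respect to the sample `X`. -/
def depth {d n : ℕ} (X : Fin n → E d) (x : E d) : ℝ :=
  sInf {r : ℝ | ∃ u : E d, ‖u‖ = 1 ∧ r = (sideCount X u x : ℝ) / (n : ℝ)}

/-- The maximum Tukey depth `λ*` of the sample `X`. -/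
def maxDepth {d n : ℕ} (X : Fin n → E d) : ℝ :=
  sSup (Set.range (depth X))

/-- The set `M(X)` of deepest points. -/
def MSet {d n : ℕ} (X : Fin n → E d) : Set (E d) :=
  {x | depth X x = maxDepth X}

/-- `U_x`: the set of optimal (unit) directions realizing the depth at `x`. -/
def USet {d n : ℕ} (X : Fin n → E d) (x : E d) : Set (E d) :=
  {u | ‖u‖ = 1 ∧ (sideCount X u x : ℝ) / (n : ℝ) = depth X x}

/-- `H_{x,y}`: the open hemisphere of unit directions `u` with `⟪u, x⟫ < ⟪u, y⟫`. -/
def HSet {d : ℕ} (x y : E d) : Set (E d) :=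
  {u | ‖u‖ = 1 ∧ ⟪u, x⟫ < ⟪u, y⟫}

/-- `B_z`. -/
def BSet {d n : ℕ} (X : Fin n → E d) (z : E d) : Set (E d) :=
  {x | x ∈ MSet X ∧ USet X x ∩ HSet x z = ∅}

/-- `B̃_z = B_z \ {z}`. -/
def BTilde {d n : ℕ} (X : Fin n → E d) (z : E d) : Set (E d) :=
  BSet X z \ {z}

/-- `v` is a unit vector normal to an affine hyperplane spanned by `d` of the sample points. -/
def normalToSampleHyperplane {d n : ℕ} (X : Fin n → E d) (v : E d) : Prop :=
  ‖v‖ = 1 ∧ ∃ (s : Finset (Fin n)) (c : ℝ), s.card = d ∧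
    (affineSpan ℝ (X '' (s : Set (Fin n))) : Set (E d)) = {x : E d | ⟪v, x⟫ = c}

/-- Condition (2.1) on a unit direction `u`. -/
def cond21 {d n : ℕ} (X : Fin n → E d) (u : E d) : Prop :=
  ∀ v : E d, normalToSampleHyperplane X v → ⟪u, v⟫ ≠ 0

/-- `A` represents the columns of a `d × (d-1)` matrix which together with the unit
vector `u` form an orthonormal basis of `ℝ^d`. -/
def IsAu {d : ℕ} (u : E d) (A : Fin (d - 1) → E d) : Prop :=
  ‖u‖ = 1 ∧ Orthonormal ℝ A ∧ ∀ j, ⟪A j, u⟫ = 0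

/-- The `A_u`-projection `A_u^T x ∈ ℝ^{d-1}` of a point `x ∈ ℝ^d`. -/
def proj {d : ℕ} (A : Fin (d - 1) → E d) (x : E d) : E (d - 1) :=
  (WithLp.equiv 2 (Fin (d - 1) → ℝ)).symm (fun j => ⟪A j, x⟫)

/-- The embedding `A_u x = ∑ j x_j A_j ∈ ℝ^d` of a point `x ∈ ℝ^{d-1}`. -/
def embed {d : ℕ} (A : Fin (d - 1) → E d) (x : E (d - 1)) : E d :=
  ∑ j, x j • A j

/-- `λ₀ = inf_{u ∈ S^{d-1}} λ*(X_u^n)`, the infimum over all directions of the maximum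
Tukey depth of the projected sample. -/
def lambda0 {d n : ℕ} (X : Fin n → E d) : ℝ :=
  sInf {r : ℝ | ∃ (u : E d) (A : Fin (d - 1) → E d),
    IsAu u A ∧ r = maxDepth (fun i => proj A (X i))}

/-- The average (barycenter) of a set `K ⊆ ℝ^d`, taken with respect to the Hausdorff
measure of dimension equal to the affine dimension of `K`. -/
def setAverage {d : ℕ} (K : Set (E d)) : E d :=
  (μH[(Module.finrank ℝ (affineSpan ℝ K).direction : ℝ)] K).toReal⁻¹ •
    ∫ x in K, x ∂(μH[(Module.finrank ℝ (affineSpan ℝ K).direction : ℝ)])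

/-- Tukey's halfspace median: the average of all deepest points. -/
def TukeyMedian {d n : ℕ} (X : Fin n → E d) : E d :=
  setAverage (MSet X)

/-- `m` contaminating points suffice to break down the Tukey median at `X`. -/
def breaksDown {d n : ℕ} (X : Fin n → E d) (m : ℕ) : Prop :=
  ∀ C : ℝ, ∃ Y : Fin m → E d, C < ‖TukeyMedian (Fin.append X Y) - TukeyMedian X‖

/-- The finite sample (additional) breakdown point of the Tukey median at `X`. -/
def FSBP {d n : ℕ} (X : Fin n → E d) : ℝ :=
  sInf {r : ℝ | ∃ m : ℕ, 1 ≤ m ∧ breaksDown X m ∧ r = (m : ℝ) / ((n : ℝ) + (m : ℝ))}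

section TukeyDepth

variable {d n : ℕ} (X : Fin n → E d)

lemma sideCount_mono {u x y : E d} (h : ⟪u, x⟫ ≤ ⟪u, y⟫) : sideCount X u x ≤ sideCount X u y :=
  Set.ncard_le_ncard (fun _ hi => le_trans hi h) (Set.toFinite _)

lemma depth_le_sideCount_div {u : E d} (hu : ‖u‖ = 1) (x : E d) :
    depth X x ≤ (sideCount X u x : ℝ) / n :=
  csInf_le ⟨0, by rintro r ⟨v, -, rfl⟩; positivity⟩ ⟨u, hu, rfl⟩

lemma mem_USet_of_inner_le {x y u : E d} (hu : u ∈ USet X x) (hdepth : depth X x ≤ depth X y)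
    (hinner : ⟪u, y⟫ ≤ ⟪u, x⟫) : u ∈ USet X y := by
  obtain ⟨hunit, hux⟩ := hu
  refine ⟨hunit, le_antisymm ?_ (depth_le_sideCount_div X hunit y)⟩
  calc (sideCount X u y : ℝ) / n ≤ (sideCount X u x : ℝ) / n := by
        gcongr; exact sideCount_mono X hinner
    _ = depth X x := hux
    _ ≤ depth X y := hdepth

lemma inner_le_of_mem_BSet {z₁ z u : E d} (hz : z ∈ BSet X z₁) (hu : u ∈ USet X z) :
    ⟪u, z₁⟫ ≤ ⟪u, z⟫ := by
  by_contra! h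
  have hmem : u ∈ USet X z ∩ HSet z z₁ := ⟨hu, hu.1, h⟩
  rw [hz.2] at hmem
  exact hmem

lemma USet_subset_of_mem_BSet {z₁ z : E d} (hz₁ : z₁ ∈ MSet X) (hz : z ∈ BSet X z₁) :
    USet X z ⊆ USet X z₁ := fun _ hu =>
  mem_USet_of_inner_le X hu (hz.1.trans hz₁.symm).le (inner_le_of_mem_BSet X hz hu)

end TukeyDepth

theorem lemma2_o2_general {d n : ℕ} (X : Fin n → E d)
    (z₁ : E d) (hz₁ : z₁ ∈ interior (MSet X)) :
    ∀ z ∈ BSet X z₁, USet X z ⊆ USet X z₁ :=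
  fun _ hz => USet_subset_of_mem_BSet X (interior_subset hz₁) hz

/-- **Lemma 2, o2.** For every `z ∈ B_{z₁}` one has `U_z ⊆ U_{z₁}`. -/
theorem lemma2_o2 {d n : ℕ} (hd : 2 ≤ d) (X : Fin n → E d)
    (hX : inGeneralPosition X) (hdim : affineSpan ℝ (MSet X) = ⊤)
    (z₁ : E d) (hz₁ : z₁ ∈ interior (MSet X)) (hB : (BTilde X z₁).Nonempty) :
    ∀ z ∈ BSet X z₁, USet X z ⊆ USet X z₁ :=
  lemma2_o2_general X z₁ hz₁
end
end

section
/- Let X^n ⊂ ℝ^d (d ≥ 2), let y ∉ cov(X^n), and let Y^m consist of m repetitions of y. Then (i) for every x ∈ cov(X^n ∪ Y^m) \ cov(X^n) with x ≠ y, D(x, X^n ∪ Y^m) ≤ m/(n+m); (ii) D(y, X^n ∪ Y^m) ≥ m/(n+m); consequently D(y, X^n ∪ Y^m) = sup over z ∈ cov(X^n ∪ Y^m) \ cov(X^n) of D(z, X^n ∪ Y^m). -/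
open scoped RealInnerProductSpace
open MeasureTheory

noncomputable section

/-!
A point `x` outside `cov(Xⁿ)` is strictly separated from `Xⁿ` by a hyperplane; the closed
halfspace bounded by the parallel hyperplane through `x`, on the side away from `Xⁿ`, contains
at most the `m` copies of `y`, so the depth of `x` is at most `m/(n+m)`. Every closed halfspace
with `y` on its boundary contains all `m` copies of `y`, so `y` attains this bound; it lies in
`cov(Xⁿ ∪ Yᵐ) \ cov(Xⁿ)` as soon as `m > 0`, and for `m = 0` both sides of (iii) vanish.
-/

open Set

section Separation

variable {F : Type*} [NormedAddCommGroup F] [InnerProductSpace ℝ F]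

lemma exists_inner_lt_of_notMem_of_convex_of_isClosed [CompleteSpace F] {t : Set F} {x : F}
    (hconv : Convex ℝ t) (hclosed : IsClosed t) (hx : x ∉ t) :
    ∃ v : F, ∀ b ∈ t, ⟪v, x⟫ < ⟪v, b⟫ := by
  obtain ⟨f, c, hfx, hft⟩ := geometric_hahn_banach_point_closed hconv hclosed hx
  refine ⟨(InnerProductSpace.toDual ℝ F).symm f, fun b hb => ?_⟩
  simp only [InnerProductSpace.toDual_symm_apply]
  exact hfx.trans (hft b hb)

lemma exists_unit_inner_lt_of_notMem_convexHull [CompleteSpace F] [Nontrivial F]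
    {ι : Type*} [Finite ι] {X : ι → F} {x : F} (hx : x ∉ convexHull ℝ (range X)) :
    ∃ u : F, ‖u‖ = 1 ∧ ∀ i, ⟪u, x⟫ < ⟪u, X i⟫ := by
  cases isEmpty_or_nonempty ι
  · obtain ⟨u, hu⟩ := exists_norm_eq F zero_le_one
    exact ⟨u, hu, isEmptyElim⟩
  obtain ⟨v, hv⟩ := exists_inner_lt_of_notMem_of_convex_of_isClosed (convex_convexHull ℝ _)
    ((finite_range X).isCompact_convexHull ℝ).isClosed hx
  have hsep i : ⟪v, x⟫ < ⟪v, X i⟫ := hv _ (subset_convexHull ℝ _ (mem_range_self i))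
  have hv0 : 0 < ‖v‖ := norm_pos_iff.2 fun h => by
    simpa [h] using hsep (Classical.arbitrary ι)
  refine ⟨‖v‖⁻¹ • v, by simp [norm_smul, hv0.ne'], fun i => ?_⟩
  simp only [real_inner_smul_left]
  exact mul_lt_mul_of_pos_left (hsep i) (inv_pos.2 hv0)

end Separation

section Depth

variable {d N : ℕ}

lemma sideCount_append {n m : ℕ} (X : Fin n → E d) (Y : Fin m → E d) (u x : E d) :
    sideCount (Fin.append X Y) u x = sideCount X u x + sideCount Y u x := by
  classical
  simp only [sideCount, ncard_eq_toFinset_card', toFinset_ofPred, Finset.card_filter,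
    Fin.sum_univ_add, Fin.append_left, Fin.append_right]

lemma sideCount_const (y u x : E d) :
    sideCount (fun _ : Fin N => y) u x = if ⟪u, y⟫ ≤ ⟪u, x⟫ then N else 0 := by
  split_ifs with h <;> simp [sideCount, h]

lemma sideCount_eq_zero {X : Fin N → E d} {u x : E d} (h : ∀ i, ⟪u, x⟫ < ⟪u, X i⟫) :
    sideCount X u x = 0 := by
  simp [sideCount, (h _).not_ge]

lemma depth_nonneg (X : Fin N → E d) (x : E d) : 0 ≤ depth X x :=
  Real.sInf_nonneg <| by rintro r ⟨u, -, rfl⟩; positivity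

lemma depth_le (X : Fin N → E d) (x : E d) {u : E d} (hu : ‖u‖ = 1) :
    depth X x ≤ sideCount X u x / N :=
  csInf_le ⟨0, by rintro r ⟨u, -, rfl⟩; positivity⟩ ⟨u, hu, rfl⟩

lemma le_depth [Nontrivial (E d)] (X : Fin N → E d) (x : E d) {b : ℝ}
    (h : ∀ u : E d, ‖u‖ = 1 → b ≤ sideCount X u x / N) : b ≤ depth X x := by
  obtain ⟨u, hu⟩ := exists_norm_eq (E d) zero_le_one
  exact le_csInf ⟨_, u, hu, rfl⟩ (by rintro r ⟨v, hv, rfl⟩; exact h v hv)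

end Depth

section Contamination

variable {d n m : ℕ} [Nontrivial (E d)] (X : Fin n → E d) (y : E d)

lemma depth_append_const_le_of_notMem_convexHull {x : E d}
    (hx : x ∉ convexHull ℝ (range X)) :
    depth (Fin.append X fun _ : Fin m => y) x ≤ m / (n + m) := by
  obtain ⟨u, hu, hsep⟩ := exists_unit_inner_lt_of_notMem_convexHull hx
  calc depth (Fin.append X fun _ : Fin m => y) x
      ≤ sideCount (Fin.append X fun _ : Fin m => y) u x / ↑(n + m) := depth_le _ _ hu
    _ ≤ m / (n + m) := by
      rw [sideCount_append, sideCount_eq_zero hsep, sideCount_const, zero_add, Nat.cast_add]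
      gcongr
      split_ifs <;> simp

lemma div_le_depth_append_const_self :
    m / (n + m) ≤ depth (Fin.append X fun _ : Fin m => y) y :=
  le_depth _ _ fun u _ => by
    rw [sideCount_append, sideCount_const, if_pos le_rfl, Nat.cast_add, Nat.cast_add]
    gcongr
    exact le_add_of_nonneg_left (Nat.cast_nonneg _)

end Contamination

/-- Let `y ∉ cov(Xⁿ)` and let `Yᵐ` consist of `m` repetitions of `y`. Then
(i) every `x ∈ cov(Xⁿ ∪ Yᵐ) \ cov(Xⁿ)` with `x ≠ y` has depth at most `m/(n+m)` in the
contaminated sample, (ii) `y` has depth at least `m/(n+m)`, and consequently (iii) the depth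
of `y` equals the supremum of the depths over `cov(Xⁿ ∪ Yᵐ) \ cov(Xⁿ)`. -/
theorem depth_outside_hull {d n m : ℕ} (hd : 2 ≤ d) (X : Fin n → E d) (y : E d)
    (hy : y ∉ convexHull ℝ (Set.range X)) :
    (∀ x ∈ convexHull ℝ (Set.range (Fin.append X (fun _ : Fin m => y))) \
        convexHull ℝ (Set.range X), x ≠ y →
      depth (Fin.append X (fun _ : Fin m => y)) x ≤ (m : ℝ) / ((n : ℝ) + (m : ℝ))) ∧
    ((m : ℝ) / ((n : ℝ) + (m : ℝ)) ≤ depth (Fin.append X (fun _ : Fin m => y)) y) ∧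
    depth (Fin.append X (fun _ : Fin m => y)) y =
      sSup {r : ℝ | ∃ z ∈ convexHull ℝ (Set.range (Fin.append X (fun _ : Fin m => y))) \
        convexHull ℝ (Set.range X), r = depth (Fin.append X (fun _ : Fin m => y)) z} := by
  have : NeZero d := ⟨by omega⟩
  set Z := Fin.append X fun _ : Fin m => y
  have hle x (hx : x ∉ convexHull ℝ (range X)) : depth Z x ≤ m / (n + m) :=
    depth_append_const_le_of_notMem_convexHull X y hx
  have hge : m / (n + m) ≤ depth Z y := div_le_depth_append_const_self X y
  refine ⟨fun x hx _ => hle x hx.2, hge, ?_⟩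
  have hdy := le_antisymm (hle y hy) hge
  set S := {r : ℝ | ∃ z ∈ convexHull ℝ (range Z) \ convexHull ℝ (range X), r = depth Z z}
  have hub : ∀ r ∈ S, r ≤ m / (n + m) := by
    rintro r ⟨z, hz, rfl⟩
    exact hle z hz.2
  rw [hdy]
  refine le_antisymm ?_ (Real.sSup_le hub (by positivity))
  rcases m.eq_zero_or_pos with rfl | hm
  · simpa using Real.sSup_nonneg (by rintro r ⟨z, -, rfl⟩; exact depth_nonneg Z z)
  · have hyZ : y ∈ convexHull ℝ (range Z) :=
      subset_convexHull ℝ _ ⟨Fin.natAdd n ⟨0, hm⟩, Fin.append_right X _ _⟩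
    exact le_csSup ⟨_, hub⟩ ⟨y, ⟨hyZ, hy⟩, hdy.symm⟩
end
end
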